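/- Let G = (V,E) be a finite simple graph with node weights w ∈ ℝ_+^V and edge weights satisfying w_{ij} ≥ min{w_i, w_j} for all edges ij ∈ E. Then the Handelman bound of order 2 equals the fractional 2-clique cover number: p_han^{(2)}(G,w) = ρ_2(G,w). -/

import Mathlib

open MvPolynomial Finset

noncomputable def handTerm {V : Type*} [DecidableEq V] (T I : Finset V) : MvPolynomial V ℝ :=
  (∏ i ∈ I, X i) * ∏ j ∈ T \ I, (1 - X j)

def InHandelman {V : Type*} [Fintype V] [DecidableEq V] (t : ℕ)
    (p : MvPolynomial V ℝ) : Prop :=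
  ∃ c : Finset V → Finset V → ℝ,
    (∀ T I, 0 ≤ c T I) ∧
    p = ∑ T ∈ Finset.univ.filter (fun T : Finset V => T.card ≤ t),
          ∑ I ∈ T.powerset, C (c T I) * handTerm T I

open Classical in
noncomputable def pGW {V : Type*} [Fintype V] (G : SimpleGraph V)
    (w : V → ℝ) (W : V → V → ℝ) : MvPolynomial V ℝ :=
  (∑ i, C (w i) * X i) -
    C (2⁻¹ : ℝ) * ∑ q ∈ Finset.univ.filter (fun q : V × V => G.Adj q.1 q.2),
      C (W q.1 q.2) * (X q.1 * X q.2)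

noncomputable def alphaW {V : Type*} (G : SimpleGraph V) (w : V → ℝ) : ℝ :=
  sSup {v : ℝ | ∃ S : Finset V, (∀ i ∈ S, ∀ j ∈ S, ¬ G.Adj i j) ∧ v = ∑ i ∈ S, w i}

def IsCliqueSet {V : Type*} (G : SimpleGraph V) (Cq : Finset V) : Prop :=
  ∀ i ∈ Cq, ∀ j ∈ Cq, i ≠ j → G.Adj i j

open Classical in
noncomputable def rhoT {V : Type*} [Fintype V] (G : SimpleGraph V) (w : V → ℝ) (t : ℕ) : ℝ :=
  sInf {v : ℝ | ∃ lam : Finset V → ℝ, (∀ Cq, 0 ≤ lam Cq) ∧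
    (∀ Cq, lam Cq ≠ 0 → IsCliqueSet G Cq ∧ Cq.card ≤ t) ∧
    (∀ i, (∑ Cq : Finset V, if i ∈ Cq then lam Cq else 0) = w i) ∧
    v = ∑ Cq : Finset V, lam Cq}

/-!
Evaluating a Handelman certificate `λ - p = ∑ c_{T,I} x^I (1 - x)^{T \ I}` at the 0/1 points with
at most two ones gives `λ = ∑_T c_{T,∅}`, `w_v = ∑_{T ∋ v} (c_{T,∅} - c_{T,{v}})`, and
`c_{T,∅} + c_{T,T} = c_{T,{i}} + c_{T,{j}}` for every non-edge `T = {i, j}`. Keeping the mass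
`c_{T,∅}` on each clique `T`, and spreading it over the singletons of a non-edge `T = {i, j}` as
`(c_{T,∅} - c_{T,{i}})⁺` and `(c_{T,∅} - c_{T,{j}})⁺` (at most `c_{T,∅}` in total by that identity),
gives a fractional clique cover of some `w' ≥ w` of total at most `λ`. Moving mass from cliques
to their subcliques turns it into a cover of exactly `w` with the same total.

Conversely, a fractional 2-clique cover `μ` of `w` yields the certificate
`∑_K μ_K ∏_{j ∈ K} (1 - x_j) + ∑_{ij ∈ E} (w_{ij} - μ_{ij}) x_i x_j` for `∑_K μ_K - p`, whose
coefficients are nonnegative because `μ_{ij} ≤ min (w_i, w_j) ≤ w_{ij}`.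
-/

section Clique

variable {V : Type*} {G : SimpleGraph V}

lemma isCliqueSet_iff_isClique {K : Finset V} : IsCliqueSet G K ↔ G.IsClique (K : Set V) :=
  Iff.rfl

lemma isCliqueSet_of_subset {K L : Finset V} (hK : IsCliqueSet G K) (hLK : L ⊆ K) :
    IsCliqueSet G L :=
  isCliqueSet_iff_isClique.2 ((isCliqueSet_iff_isClique.1 hK).subset (by simpa))

variable [DecidableEq V]

lemma exists_eq_pair_of_not_isCliqueSet {T : Finset V} (hT : T.card ≤ 2)
    (h : ¬ IsCliqueSet G T) : ∃ i j, i ≠ j ∧ ¬ G.Adj i j ∧ T = {i, j} := by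
  simp only [IsCliqueSet, not_forall] at h
  obtain ⟨i, hi, j, hj, hij, hadj⟩ := h
  refine ⟨i, j, hij, hadj, (Finset.eq_of_subset_of_card_le ?_ ?_).symm⟩
  · simp [Finset.insert_subset_iff, hi, hj]
  · simpa [Finset.card_pair hij] using hT

end Clique

section Coverage

variable {V : Type*} [DecidableEq V]

def charVec (R : Finset V) : V → ℝ := fun v => if v ∈ R then 1 else 0

variable [Fintype V]

noncomputable def coverage : (Finset V → ℝ) →ₗ[ℝ] V → ℝ :=
  Fintype.linearCombination ℝ charVec

lemma coverage_apply (μ : Finset V → ℝ) (v : V) :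
    coverage μ v = ∑ K, if v ∈ K then μ K else 0 := by
  simp [coverage, Fintype.linearCombination_apply, charVec]

lemma coverage_single (T : Finset V) (a : ℝ) : coverage (Pi.single T a) = a • charVec T :=
  Fintype.linearCombination_apply_single ℝ charVec T a

lemma le_coverage_of_mem {μ : Finset V → ℝ} (hμ : 0 ≤ μ) {K : Finset V} {v : V} (hv : v ∈ K) :
    μ K ≤ coverage μ v := by
  rw [coverage_apply]
  calc μ K = if v ∈ K then μ K else 0 := (if_pos hv).symm
    _ ≤ _ := Finset.single_le_sum (f := fun L => if v ∈ L then μ L else 0)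
        (fun L _ => by split_ifs; exacts [hμ L, le_rfl]) (Finset.mem_univ K)

lemma coverage_nonneg {μ : Finset V → ℝ} (hμ : 0 ≤ μ) : 0 ≤ coverage μ := fun v => by
  rw [coverage_apply]
  exact Finset.sum_nonneg fun K _ => by split_ifs; exacts [hμ K, le_rfl]

lemma sum_smul_sum_eq_sum_coverage_smul {M : Type*} [AddCommMonoid M] [Module ℝ M]
    (μ : Finset V → ℝ) (f : V → M) : ∑ K, μ K • ∑ j ∈ K, f j = ∑ j, coverage μ j • f j := by
  simp only [coverage_apply, Finset.sum_smul, ite_smul, zero_smul, Finset.smul_sum]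
  rw [Finset.sum_comm]
  simp [Finset.sum_ite_mem]

def IsFracCliqueCover (G : SimpleGraph V) (t : ℕ) (w : V → ℝ) (μ : Finset V → ℝ) : Prop :=
  0 ≤ μ ∧ (∀ K, μ K ≠ 0 → IsCliqueSet G K ∧ K.card ≤ t) ∧ coverage μ = w

lemma rhoT_eq (G : SimpleGraph V) (w : V → ℝ) (t : ℕ) :
    rhoT G w t = sInf {v | ∃ μ, IsFracCliqueCover G t w μ ∧ v = ∑ K, μ K} := by
  unfold rhoT IsFracCliqueCover
  congr! 5 with v μ
  simp only [funext_iff, coverage_apply, Pi.le_def, Pi.zero_apply, and_assoc]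
  congr!

end Coverage

section Shrink

variable {V : Type*} [DecidableEq V]

/-- Moves a `θ`-fraction of the mass of every set containing `i` to the same set without `i`. -/
def shrinkAt (i : V) (θ : ℝ) (μ : Finset V → ℝ) : Finset V → ℝ :=
  fun K => if i ∈ K then (1 - θ) * μ K else μ K + θ * μ (insert i K)

variable {i : V} {θ : ℝ} {μ : Finset V → ℝ}

lemma shrinkAt_nonneg (hθ₀ : 0 ≤ θ) (hθ₁ : θ ≤ 1) (hμ : 0 ≤ μ) : 0 ≤ shrinkAt i θ μ := by
  intro K
  unfold shrinkAt
  split_ifs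
  · exact mul_nonneg (sub_nonneg.2 hθ₁) (hμ K)
  · exact add_nonneg (hμ K) (mul_nonneg hθ₀ (hμ _))

lemma exists_superset_of_shrinkAt_ne_zero {K : Finset V} (h : shrinkAt i θ μ K ≠ 0) :
    ∃ L, K ⊆ L ∧ μ L ≠ 0 := by
  unfold shrinkAt at h
  split_ifs at h
  · exact ⟨K, subset_rfl, right_ne_zero_of_mul h⟩
  · by_cases hK : μ K = 0
    · exact ⟨insert i K, Finset.subset_insert i K, (by simpa [hK] using h : _ ∧ _).2⟩
    · exact ⟨K, subset_rfl, hK⟩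

variable [Fintype V]

lemma sum_filter_notMem_insert (i : V) (g : Finset V → ℝ) :
    ∑ K with i ∉ K, g (insert i K) = ∑ K with i ∈ K, g K :=
  Finset.sum_nbij' (insert i) (·.erase i) (by simp) (by simp)
    (fun K hK => Finset.erase_insert (by simpa using hK))
    (fun K hK => Finset.insert_erase (by simpa using hK)) (fun _ _ => rfl)

lemma sum_shrinkAt : ∑ K, shrinkAt i θ μ K = ∑ K, μ K := by
  have hshift := sum_filter_notMem_insert i μ
  simp only [shrinkAt, Finset.sum_ite, Finset.sum_add_distrib, ← Finset.mul_sum, hshift]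
  rw [← Finset.sum_filter_add_sum_filter_not univ (fun K => i ∈ K) μ]
  ring

lemma coverage_shrinkAt (v : V) :
    coverage (shrinkAt i θ μ) v = if v = i then (1 - θ) * coverage μ v else coverage μ v := by
  simp only [coverage_apply]
  split_ifs with hv
  · subst hv
    rw [Finset.mul_sum]
    refine Finset.sum_congr rfl fun K _ => ?_
    simp only [shrinkAt]
    split_ifs <;> ring
  · set g : Finset V → ℝ := fun K => if v ∈ K then μ K else 0
    have hins (K : Finset V) : v ∈ insert i K ↔ v ∈ K := by simp [hv]
    calc ∑ K, (if v ∈ K then shrinkAt i θ μ K else 0)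
        = ∑ K with i ∈ K, (1 - θ) * g K + ∑ K with i ∉ K, (g K + θ * g (insert i K)) := by
          rw [← Finset.sum_filter_add_sum_filter_not univ (fun K => i ∈ K)]
          congr 1 <;> refine Finset.sum_congr rfl fun K hK => ?_ <;>
            simp only [Finset.mem_filter, Finset.mem_univ, true_and] at hK <;>
            simp only [shrinkAt, g, hK, hins, if_true, if_false] <;> split_ifs <;> ring
      _ = ∑ K, g K := by
          rw [Finset.sum_add_distrib, ← Finset.mul_sum, ← Finset.mul_sum,
            sum_filter_notMem_insert i g,
            ← Finset.sum_filter_add_sum_filter_not univ (fun K => i ∈ K) g]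
          ring

lemma exists_coverage_eq_of_le_coverage {P : Finset V → Prop}
    (hP : ∀ ⦃K L⦄, P K → L ⊆ K → P L) {w : V → ℝ} (hw : 0 ≤ w) {μ : Finset V → ℝ}
    (hμ : 0 ≤ μ) (hμP : ∀ K, μ K ≠ 0 → P K) (hwμ : w ≤ coverage μ) :
    ∃ ν, 0 ≤ ν ∧ (∀ K, ν K ≠ 0 → P K) ∧ coverage ν = w ∧ ∑ K, ν K = ∑ K, μ K := by
  -- Shrinking at `i` changes the coverage only at `i`, so the vertices can be fixed one at a time.
  suffices ∀ S : Finset V, ∃ ν, 0 ≤ ν ∧ (∀ K, ν K ≠ 0 → P K) ∧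
      (∀ v, coverage ν v = if v ∈ S then w v else coverage μ v) ∧ ∑ K, ν K = ∑ K, μ K by
    obtain ⟨ν, hν, hνP, hcov, hsum⟩ := this univ
    exact ⟨ν, hν, hνP, funext fun v => by simp [hcov], hsum⟩
  intro S
  induction S using Finset.induction_on with
  | empty => exact ⟨μ, hμ, hμP, by simp, rfl⟩
  | insert i S hi ih =>
    obtain ⟨ν, hν, hνP, hcov, hsum⟩ := ih
    have hwi : w i ≤ coverage ν i := by simpa [hcov, hi] using hwμ i
    have hr₀ : 0 ≤ w i / coverage ν i := div_nonneg (hw i) ((hw i).trans hwi)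
    have hr₁ : w i / coverage ν i ≤ 1 := div_le_one_of_le₀ hwi ((hw i).trans hwi)
    have hr : w i / coverage ν i * coverage ν i = w i := by
      rcases eq_or_ne (coverage ν i) 0 with h | h
      · rw [h] at hwi ⊢
        simp [le_antisymm hwi (hw i)]
      · exact div_mul_cancel₀ _ h
    refine ⟨shrinkAt i (1 - w i / coverage ν i) ν,
      shrinkAt_nonneg (by linarith) (by linarith) hν, fun K hK => ?_, fun v => ?_,
      sum_shrinkAt.trans hsum⟩
    · obtain ⟨L, hKL, hL⟩ := exists_superset_of_shrinkAt_ne_zero hK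
      exact hP (hνP L hL) hKL
    · rw [coverage_shrinkAt]
      by_cases hvi : v = i
      · subst hvi
        simp [hr]
      · simp [hvi, hcov]

end Shrink

namespace InHandelman

variable {V : Type*} [Fintype V] [DecidableEq V] {t : ℕ}

lemma zero : InHandelman t (0 : MvPolynomial V ℝ) :=
  ⟨0, fun _ _ => le_rfl, by simp⟩

lemma add {p q : MvPolynomial V ℝ} (hp : InHandelman t p) (hq : InHandelman t q) :
    InHandelman t (p + q) := by
  obtain ⟨c, hc, rfl⟩ := hp
  obtain ⟨d, hd, rfl⟩ := hq
  refine ⟨c + d, fun T I => add_nonneg (hc T I) (hd T I), ?_⟩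
  simp only [Pi.add_apply, map_add, add_mul, Finset.sum_add_distrib]

lemma sum {ι : Type*} (s : Finset ι) {p : ι → MvPolynomial V ℝ}
    (hp : ∀ i ∈ s, InHandelman t (p i)) : InHandelman t (∑ i ∈ s, p i) :=
  Finset.sum_induction p _ (fun _ _ => add) zero hp

lemma C_mul_handTerm {a : ℝ} (ha : 0 ≤ a) {T I : Finset V} (hT : T.card ≤ t) (hI : I ⊆ T) :
    InHandelman t (C a * handTerm T I) := by
  refine ⟨fun T' I' => if T' = T ∧ I' = I then a else 0,
    fun _ _ => ite_nonneg ha le_rfl, ?_⟩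
  simp [apply_ite C, ite_mul, ite_and, Finset.sum_ite_eq', hT, hI]

end InHandelman

section Evaluation

variable {V : Type*} [DecidableEq V]

lemma eval_charVec_handTerm (R : Finset V) {T I : Finset V} (hI : I ⊆ T) :
    eval (charVec R) (handTerm T I) = if T ∩ R = I then 1 else 0 := by
  have hiff : T ∩ R = I ↔ (∀ i ∈ I, i ∈ R) ∧ ∀ j ∈ T \ I, j ∉ R := by
    constructor
    · rintro rfl
      exact ⟨fun i hi => (Finset.mem_inter.1 hi).2, fun j hj hjR => by simp_all⟩
    · rintro ⟨hIR, hTI⟩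
      ext j
      by_cases hj : j ∈ I
      · simp [hj, hI hj, hIR j hj]
      · simpa [hj] using fun hjT => hTI j (by simp [hjT, hj])
  have hneg (j : V) : 1 - charVec R j = if j ∉ R then 1 else 0 := by
    unfold charVec
    split_ifs <;> simp_all
  simp only [handTerm, map_mul, map_prod, map_sub, map_one, eval_X, hneg]
  simp only [charVec, Finset.prod_boole, ite_zero_mul_ite_zero, mul_one, hiff]

lemma eval_charVec_sum_handTerm (R : Finset V) (s : Finset (Finset V))
    (c : Finset V → Finset V → ℝ) :
    eval (charVec R) (∑ T ∈ s, ∑ I ∈ T.powerset, C (c T I) * handTerm T I)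
      = ∑ T ∈ s, c T (T ∩ R) := by
  simp only [map_sum, map_mul, eval_C]
  refine Finset.sum_congr rfl fun T _ => ?_
  rw [Finset.sum_congr rfl fun I hI => by rw [eval_charVec_handTerm R (Finset.mem_powerset.1 hI)]]
  simp [mul_ite, Finset.sum_ite_eq, Finset.inter_subset_left]

variable [Fintype V]

lemma eval_charVec_pGW (G : SimpleGraph V) (w : V → ℝ) (W : V → V → ℝ) {S : Finset V}
    (hS : ∀ i ∈ S, ∀ j ∈ S, ¬ G.Adj i j) :
    eval (charVec S) (pGW G w W) = ∑ i ∈ S, w i := by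
  simp only [pGW, map_sub, map_mul, map_sum, eval_C, eval_X, charVec, mul_ite, mul_one,
    mul_zero, Finset.sum_ite_mem, Finset.univ_inter, sub_eq_self, mul_eq_zero, inv_eq_zero,
    OfNat.ofNat_ne_zero, false_or]
  refine Finset.sum_eq_zero fun q hq => ?_
  have hadj : G.Adj q.1 q.2 := by simpa using hq
  split_ifs with h2 h1 <;> first | rfl | exact absurd hadj (hS _ h1 _ h2)

end Evaluation

section Certificate

variable {V : Type*} [Fintype V] [DecidableEq V] {G : SimpleGraph V} {w : V → ℝ}
  {W : V → V → ℝ} {lam : ℝ} {c : Finset V → Finset V → ℝ}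

lemma sub_sum_eq_of_handelman
    (heq : C lam - pGW G w W = ∑ T with T.card ≤ 2, ∑ I ∈ T.powerset, C (c T I) * handTerm T I)
    {S : Finset V} (hS : ∀ i ∈ S, ∀ j ∈ S, ¬ G.Adj i j) :
    lam - ∑ i ∈ S, w i = ∑ T with T.card ≤ 2, c T (T ∩ S) := by
  rw [← eval_charVec_pGW G w W hS, ← eval_charVec_sum_handTerm, ← heq, map_sub, eval_C]

variable (heq : C lam - pGW G w W =
  ∑ T with T.card ≤ 2, ∑ I ∈ T.powerset, C (c T I) * handTerm T I)
include heq

lemma eq_sum_of_handelman : lam = ∑ T with T.card ≤ 2, c T ∅ := by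
  simpa using sub_sum_eq_of_handelman heq (S := ∅) (by simp)

lemma weight_eq_sum_of_handelman (v : V) :
    w v = ∑ T with T.card ≤ 2, (c T ∅ - c T (T ∩ {v})) := by
  have h := sub_sum_eq_of_handelman heq (S := {v}) (by simp)
  rw [Finset.sum_sub_distrib, ← eq_sum_of_handelman heq, ← h, Finset.sum_singleton]
  ring

lemma pair_identity_of_handelman {i j : V} (hij : i ≠ j) (hadj : ¬ G.Adj i j) :
    c {i, j} ∅ + c {i, j} {i, j} = c {i, j} {i} + c {i, j} {j} := by
  have hS : ∀ a ∈ ({i, j} : Finset V), ∀ b ∈ ({i, j} : Finset V), ¬ G.Adj a b := by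
    simp only [Finset.mem_insert, Finset.mem_singleton]
    rintro a (rfl | rfl) b (rfl | rfl) <;> simp_all [SimpleGraph.adj_comm]
  have hsum : ∑ T with T.card ≤ 2,
      (c T (T ∩ {i, j}) - c T (T ∩ {i}) - c T (T ∩ {j}) + c T ∅) = 0 := by
    have hij' := sub_sum_eq_of_handelman heq hS
    have hi := sub_sum_eq_of_handelman heq (S := {i}) (by simp)
    have hj := sub_sum_eq_of_handelman heq (S := {j}) (by simp)
    simp only [Finset.sum_add_distrib, Finset.sum_sub_distrib, ← hij', ← hi, ← hj,
      ← eq_sum_of_handelman heq, Finset.sum_pair hij, Finset.sum_singleton]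
    ring
  rw [Finset.sum_eq_single_of_mem {i, j} (by simp [Finset.card_pair hij])] at hsum
  · rw [Finset.inter_self, Finset.inter_singleton_of_mem (by simp),
      Finset.inter_singleton_of_mem (by simp)] at hsum
    linarith
  · intro T hT hTij
    by_cases hi : i ∈ T
    · have hj : j ∉ T := fun hj => hTij (Finset.eq_of_subset_of_card_le
        (by simp [Finset.insert_subset_iff, hi, hj])
        (by simpa [Finset.card_pair hij] using hT)).symm
      rw [Finset.pair_comm, Finset.inter_insert_of_notMem hj,
        Finset.inter_singleton_of_notMem hj]
      ring
    · rw [Finset.inter_insert_of_notMem hi, Finset.inter_singleton_of_notMem hi]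
      ring

end Certificate

section LocalCover

variable {V : Type*} [DecidableEq V] {G : SimpleGraph V}

variable (G) in
open Classical in
noncomputable def localCover (c : Finset V → Finset V → ℝ) (T : Finset V) : Finset V → ℝ :=
  if IsCliqueSet G T then Pi.single T (c T ∅)
  else ∑ k ∈ T, Pi.single {k} (max (c T ∅ - c T {k}) 0)

variable {c : Finset V → Finset V → ℝ} {T : Finset V}

lemma localCover_nonneg (hc : ∀ T I, 0 ≤ c T I) : 0 ≤ localCover G c T := by
  unfold localCover
  split_ifs
  · exact Pi.single_nonneg.2 (hc T ∅)
  · exact Finset.sum_nonneg fun k _ => Pi.single_nonneg.2 (le_max_right _ _)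

lemma localCover_ne_zero (hT : T.card ≤ 2) {K : Finset V} (h : localCover G c T K ≠ 0) :
    IsCliqueSet G K ∧ K.card ≤ 2 := by
  unfold localCover at h
  split_ifs at h with hcl
  · obtain rfl : K = T := by by_contra hKT; simp [hKT] at h
    exact ⟨hcl, hT⟩
  · obtain ⟨k, -, hk⟩ := Finset.exists_ne_zero_of_sum_ne_zero (by simpa [Finset.sum_apply] using h)
    obtain rfl : K = {k} := by by_contra hKk; simp [hKk] at hk
    exact ⟨isCliqueSet_iff_isClique.2 (by simp), by simp⟩

variable [Fintype V] {w : V → ℝ} {W : V → V → ℝ} {lam : ℝ}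

lemma sub_le_coverage_localCover (hc : ∀ T I, 0 ≤ c T I) {v : V} (hv : v ∈ T) :
    c T ∅ - c T {v} ≤ coverage (localCover G c T) v := by
  unfold localCover
  split_ifs
  · simp [coverage_single, charVec, hv, hc T {v}]
  · rw [map_sum, Finset.sum_apply, Finset.sum_eq_single_of_mem v hv]
    · simp [coverage_single, charVec]
    · intro k _ hkv
      simp [coverage_single, charVec, Ne.symm hkv]

lemma sum_localCover_le (hc : ∀ T I, 0 ≤ c T I) (hT : T.card ≤ 2)
    (hpair : ∀ i j, i ≠ j → ¬ G.Adj i j →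
      c {i, j} ∅ + c {i, j} {i, j} = c {i, j} {i} + c {i, j} {j}) :
    ∑ K, localCover G c T K ≤ c T ∅ := by
  unfold localCover
  split_ifs with hcl
  · simp [Finset.sum_pi_single']
  · obtain ⟨i, j, hij, hadj, rfl⟩ := exists_eq_pair_of_not_isCliqueSet hT hcl
    have := hpair i j hij hadj
    have := hc {i, j} ∅
    have := hc {i, j} {i, j}
    have := hc {i, j} {i}
    have := hc {i, j} {j}
    simp only [Finset.sum_apply]
    rw [Finset.sum_comm]
    simp only [Finset.sum_pi_single', Finset.mem_univ, if_true, Finset.sum_pair hij, max_def]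
    split_ifs <;> linarith

lemma exists_isFracCliqueCover_le_of_handelman (hw : 0 ≤ w) (hc : ∀ T I, 0 ≤ c T I)
    (heq : C lam - pGW G w W =
      ∑ T with T.card ≤ 2, ∑ I ∈ T.powerset, C (c T I) * handTerm T I) :
    ∃ ν, IsFracCliqueCover G 2 w ν ∧ ∑ K, ν K ≤ lam := by
  set μ := ∑ T with T.card ≤ 2, localCover G c T
  have hμ : 0 ≤ μ := Finset.sum_nonneg fun T _ => localCover_nonneg hc
  have hμP (K : Finset V) (hK : μ K ≠ 0) : IsCliqueSet G K ∧ K.card ≤ 2 := by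
    simp only [μ, Finset.sum_apply] at hK
    obtain ⟨T, hT, hTK⟩ := Finset.exists_ne_zero_of_sum_ne_zero hK
    exact localCover_ne_zero (by simpa using hT) hTK
  have hwμ : w ≤ coverage μ := by
    intro v
    rw [weight_eq_sum_of_handelman heq v, map_sum, Finset.sum_apply]
    refine Finset.sum_le_sum fun T _ => ?_
    by_cases hv : v ∈ T
    · rw [Finset.inter_singleton_of_mem hv]
      exact sub_le_coverage_localCover hc hv
    · rw [Finset.inter_singleton_of_notMem hv, sub_self]
      exact coverage_nonneg (localCover_nonneg hc) v
  have hμlam : ∑ K, μ K ≤ lam := by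
    rw [eq_sum_of_handelman heq]
    simp only [μ, Finset.sum_apply]
    rw [Finset.sum_comm]
    exact Finset.sum_le_sum fun T hT => sum_localCover_le hc (by simpa using hT)
      fun i j => pair_identity_of_handelman heq
  obtain ⟨ν, hν, hνP, hcov, hsum⟩ :=
    exists_coverage_eq_of_le_coverage (P := fun K => IsCliqueSet G K ∧ K.card ≤ 2)
      (fun K L hK hLK => ⟨isCliqueSet_of_subset hK.1 hLK, (Finset.card_le_card hLK).trans hK.2⟩)
      hw hμ hμP hwμ
  exact ⟨ν, ⟨hν, hνP, hcov⟩, hsum ▸ hμlam⟩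

end LocalCover

section Expansion

variable {V : Type*} [DecidableEq V]

lemma prod_one_sub_of_card_le_two {R : Type*} [CommRing R] (f : V → R) {K : Finset V}
    (hK : K.card ≤ 2) :
    ∏ j ∈ K, (1 - f j) = 1 - ∑ j ∈ K, f j + if K.card = 2 then ∏ j ∈ K, f j else 0 := by
  obtain h | h | h : K.card = 0 ∨ K.card = 1 ∨ K.card = 2 := by omega
  · simp [Finset.card_eq_zero.1 h]
  · obtain ⟨a, rfl⟩ := Finset.card_eq_one.1 h
    simp
  · obtain ⟨a, b, hab, rfl⟩ := Finset.card_eq_two.1 h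
    simp only [Finset.prod_pair hab, Finset.sum_pair hab, h, if_true]
    ring

lemma pair_eq_of_mem_offDiag {K : Finset V} (hK : K.card = 2) {q : V × V} (hq : q ∈ K.offDiag) :
    {q.1, q.2} = K := by
  obtain ⟨h1, h2, h12⟩ := Finset.mem_offDiag.1 hq
  exact Finset.eq_of_subset_of_card_le (by simp [Finset.insert_subset_iff, h1, h2])
    (by rw [hK, Finset.card_pair h12])

variable [Fintype V]

lemma sum_offDiag_pair {M : Type*} [AddCommMonoid M] (h : Finset V → M) :
    ∑ q ∈ (univ : Finset V).offDiag, h {q.1, q.2} = 2 • ∑ K with K.card = 2, h K := by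
  rw [← Finset.sum_fiberwise_of_maps_to (g := fun q : V × V => ({q.1, q.2} : Finset V))
    (t := univ.filter fun K : Finset V => K.card = 2), Finset.smul_sum]
  · refine Finset.sum_congr rfl fun K hK => ?_
    have hK2 : K.card = 2 := (Finset.mem_filter.1 hK).2
    have hfib : (univ : Finset V).offDiag.filter (fun q => ({q.1, q.2} : Finset V) = K)
        = K.offDiag := by
      ext q
      simp only [Finset.mem_filter, Finset.mem_offDiag, Finset.mem_univ, true_and]
      constructor
      · rintro ⟨h12, rfl⟩
        simp [h12]
      · intro hq
        exact ⟨hq.2.2, pair_eq_of_mem_offDiag hK2 (Finset.mem_offDiag.2 hq)⟩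
    rw [hfib, Finset.sum_congr rfl fun q hq => by rw [pair_eq_of_mem_offDiag hK2 hq],
      Finset.sum_const, Finset.offDiag_card, hK2]
  · intro q hq
    simp [Finset.card_pair (Finset.mem_offDiag.1 hq).2.2]

end Expansion

section CoverToHandelman

variable {V : Type*} [Fintype V] [DecidableEq V] {G : SimpleGraph V} {w : V → ℝ}
  {W : V → V → ℝ} {μ : Finset V → ℝ}

open Classical in
lemma two_mul_sum_card_two_eq (hμ : ∀ K, μ K ≠ 0 → IsCliqueSet G K)
    (x : V → ℝ) :
    2 * ∑ K with K.card = 2, μ K * ∏ j ∈ K, x j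
      = ∑ q : V × V with G.Adj q.1 q.2, μ {q.1, q.2} * (x q.1 * x q.2) := by
  calc 2 * ∑ K with K.card = 2, μ K * ∏ j ∈ K, x j
      = ∑ q ∈ (univ : Finset V).offDiag, μ {q.1, q.2} * ∏ j ∈ {q.1, q.2}, x j := by
        rw [sum_offDiag_pair (fun K => μ K * ∏ j ∈ K, x j), nsmul_eq_mul, Nat.cast_ofNat]
    _ = ∑ q ∈ (univ : Finset V).offDiag, μ {q.1, q.2} * (x q.1 * x q.2) :=
        Finset.sum_congr rfl fun q hq => by rw [Finset.prod_pair (Finset.mem_offDiag.1 hq).2.2]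
    _ = _ := by
        refine (Finset.sum_subset (fun q hq => ?_) (fun q hq hadj => ?_)).symm
        · simpa using (Finset.mem_filter.1 hq).2.ne
        · have hne : q.1 ≠ q.2 := (Finset.mem_offDiag.1 hq).2.2
          have hnadj : ¬ G.Adj q.1 q.2 := by simpa using hadj
          have hK : μ {q.1, q.2} = 0 := by
            by_contra h
            exact hnadj (hμ _ h q.1 (by simp) q.2 (by simp) hne)
          simp [hK]

open Classical in
lemma C_sum_sub_pGW_eq (hμ : ∀ K, μ K ≠ 0 → IsCliqueSet G K ∧ K.card ≤ 2)
    (hcov : coverage μ = w) :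
    C (∑ K, μ K) - pGW G w W = ∑ K, C (μ K) * handTerm K ∅ +
      ∑ q : V × V with G.Adj q.1 q.2,
        C (2⁻¹ * (W q.1 q.2 - μ {q.1, q.2})) * handTerm {q.1, q.2} {q.1, q.2} := by
  apply MvPolynomial.funext
  intro x
  simp only [pGW, handTerm, map_sub, map_add, map_sum, map_mul, map_prod, map_one, eval_C, eval_X,
    Finset.prod_empty, Finset.sdiff_empty, Finset.sdiff_self, one_mul, mul_one]
  have hexp : ∑ K, μ K * ∏ j ∈ K, (1 - x j)
      = ∑ K, μ K - ∑ j, w j * x j + ∑ K with K.card = 2, μ K * ∏ j ∈ K, x j := by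
    have hK (K : Finset V) : μ K * ∏ j ∈ K, (1 - x j)
        = μ K - μ K * ∑ j ∈ K, x j + μ K * if K.card = 2 then ∏ j ∈ K, x j else 0 := by
      by_cases h : μ K = 0
      · simp [h]
      · rw [prod_one_sub_of_card_le_two x (hμ K h).2]
        ring
    have hlin := sum_smul_sum_eq_sum_coverage_smul μ x
    simp only [smul_eq_mul, hcov] at hlin
    rw [Finset.sum_congr rfl fun K _ => hK K, Finset.sum_add_distrib, Finset.sum_sub_distrib,
      hlin, Finset.sum_filter]
    simp only [mul_ite, mul_zero]
  have hquad : ∑ q : V × V with G.Adj q.1 q.2,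
        2⁻¹ * (W q.1 q.2 - μ {q.1, q.2}) * ∏ j ∈ {q.1, q.2}, x j
      = 2⁻¹ * ∑ q : V × V with G.Adj q.1 q.2, W q.1 q.2 * (x q.1 * x q.2)
        - 2⁻¹ * ∑ q : V × V with G.Adj q.1 q.2, μ {q.1, q.2} * (x q.1 * x q.2) := by
    rw [Finset.mul_sum, Finset.mul_sum, ← Finset.sum_sub_distrib]
    refine Finset.sum_congr rfl fun q hq => ?_
    rw [Finset.prod_pair (by simpa using (Finset.mem_filter.1 hq).2.ne)]
    ring
  linear_combination -hexp - hquad - (1 / 2 : ℝ) * two_mul_sum_card_two_eq (fun K h => (hμ K h).1) x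

lemma inHandelman_of_isFracCliqueCover (hW : ∀ i j, G.Adj i j → min (w i) (w j) ≤ W i j)
    (hμ : IsFracCliqueCover G 2 w μ) : InHandelman 2 (C (∑ K, μ K) - pGW G w W) := by
  obtain ⟨hμ0, hμP, hcov⟩ := hμ
  rw [C_sum_sub_pGW_eq hμP hcov]
  refine (InHandelman.sum _ fun K _ => ?_).add (InHandelman.sum _ fun q hq => ?_)
  · by_cases h : μ K = 0
    · simpa [h] using InHandelman.zero
    · exact InHandelman.C_mul_handTerm (hμ0 K) (hμP K h).2 (Finset.empty_subset _)
  · have hadj : G.Adj q.1 q.2 := by simpa using hq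
    have h1 := le_coverage_of_mem hμ0 (Finset.mem_insert_self q.1 {q.2})
    have h2 := le_coverage_of_mem hμ0 (by simp : q.2 ∈ ({q.1, q.2} : Finset V))
    rw [hcov] at h1 h2
    have := (le_min h1 h2).trans (hW _ _ hadj)
    exact InHandelman.C_mul_handTerm (by linarith) (by simp [Finset.card_pair hadj.ne]) subset_rfl

end CoverToHandelman

theorem handelman_two_eq_rho_two_general {V : Type*} [Fintype V] [DecidableEq V]
    (G : SimpleGraph V) (w : V → ℝ) (W : V → V → ℝ) (hw : ∀ v, 0 ≤ w v)
    (hW : ∀ i j, G.Adj i j → min (w i) (w j) ≤ W i j) :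
    sInf {lam : ℝ | InHandelman 2 (C lam - pGW G w W)} = rhoT G w 2 := by
  rw [rhoT_eq]
  apply csInf_eq_csInf_of_forall_exists_le
  · rintro lam ⟨c, hc, heq⟩
    obtain ⟨ν, hν, hνlam⟩ := exists_isFracCliqueCover_le_of_handelman hw hc heq
    exact ⟨_, ⟨ν, hν, rfl⟩, hνlam⟩
  · rintro _ ⟨μ, hμ, rfl⟩
    exact ⟨_, inHandelman_of_isFracCliqueCover hW hμ, le_rfl⟩

/-- For node weights `w ≥ 0` and edge weights `w_{ij} ≥ min(w_i,w_j)`,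
the Handelman bound of order 2 equals the fractional 2-clique cover number:
`p_han^{(2)}(G,w) = ρ_2(G,w)`. -/
theorem handelman_two_eq_rho_two {V : Type*} [Fintype V] [DecidableEq V]
    (G : SimpleGraph V) (w : V → ℝ) (W : V → V → ℝ) (hw : ∀ v, 0 ≤ w v)
    (hWs : ∀ i j, W i j = W j i)
    (hW : ∀ i j, G.Adj i j → min (w i) (w j) ≤ W i j) :
    sInf {lam : ℝ | InHandelman 2 (C lam - pGW G w W)} = rhoT G w 2 :=
  handelman_two_eq_rho_two_general G w W hw hW
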